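/- If (S, N) is a quadratic normalisation of class (4, 3), then the restriction N̄ of N to length-two words is idempotent and satisfies N̄_{212} = N̄_{2121} = N̄_{1212} as maps on length-three words. Conversely, if φ is an idempotent map from length-two words over S to itself satisfying φ_{212} = φ_{2121} = φ_{1212} on length-three words, then there exists a quadratic normalisation (S, N) of class (4, 3) with N̄ = φ. -/

import Mathlib

namespace QN

variable {S A : Type*}

/-- A normalisation: a length-preserving map `N` on words over `S` fixing
length-one words and satisfying `N (u ++ N w ++ v) = N (u ++ w ++ v)`. -/
structure Normalisation (S : Type*) where
  N : List S → List S
  length_eq : ∀ w : List S, (N w).length = w.length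
  single : ∀ s : S, N [s] = [s]
  mid : ∀ u v w : List S, N (u ++ N w ++ v) = N (u ++ w ++ v)

/-- Extract the two entries of a length-two word (with a default fallback). -/
def pairOf : List S → S → S → S × S
  | [x, y], _, _ => (x, y)
  | _, s, t => (s, t)

/-- The restriction `N̄` of `N` to length-two words, as a map on pairs. -/
def nbar (N : List S → List S) (s t : S) : S × S :=
  pairOf (N [s, t]) s t

/-- Apply `f` to the length-two factor at (1-indexed) position `i`;
out-of-range positions act as the identity. -/
def applyAt (f : S → S → S × S) : ℕ → List S → List S
  | 1, a :: b :: l => (f a b).1 :: (f a b).2 :: l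
  | n + 2, a :: l => a :: applyAt f (n + 1) l
  | _, l => l

/-- `φ_u`: apply `φ` at the successive positions of `u`, leftmost entry of `u` first. -/
def applySeq (f : S → S → S × S) (u : List ℕ) (w : List S) : List S :=
  u.foldl (fun w i => applyAt f i w) w

/-- A word is `N`-normal iff all its length-two factors are `N`-normal. -/
def LocallyNormal (N : List S → List S) : Prop :=
  ∀ w : List S, N w = w ↔ ∀ u v : List S, ∀ s t : S, w = u ++ s :: t :: v → N [s, t] = [s, t]

/-- Every word is normalised by finitely many applications of `N̄` at positions. -/
def NbarGenerated (N : List S → List S) : Prop :=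
  ∀ w : List S, ∃ u : List ℕ, N w = applySeq (nbar N) u w

/-- A normalisation map is quadratic if it satisfies the two locality conditions. -/
def Quadratic (N : List S → List S) : Prop :=
  LocallyNormal N ∧ NbarGenerated N

/-- `e` is `N`-neutral: `N (w·e) = N (e·w) = N w · e`. -/
def Neutral (N : List S → List S) (e : S) : Prop :=
  ∀ w : List S, N (w ++ [e]) = N w ++ [e] ∧ N (e :: w) = N w ++ [e]

/-- The alternating sequence of length `m` starting with `k ∈ {1,2}`. -/
def altFrom : ℕ → ℕ → List ℕ
  | _, 0 => []
  | k, n + 1 => k :: altFrom (3 - k) n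

/-- `(S, N)` is of left-class `c`: `N = N̄_{α_c}` on length-three words. -/
def LeftClass (N : List S → List S) (c : ℕ) : Prop :=
  ∀ w : List S, w.length = 3 → N w = applySeq (nbar N) (altFrom 1 c) w

/-- `(S, N)` is of right-class `c`: `N = N̄_{ᾱ_c}` on length-three words. -/
def RightClass (N : List S → List S) (c : ℕ) : Prop :=
  ∀ w : List S, w.length = 3 → N w = applySeq (nbar N) (altFrom 2 c) w

/-- The domino rule is valid for `f`. -/
def DominoRule (f : S → S → S × S) : Prop :=
  ∀ s₁ s₂ s₁' s₂' t₀ t₁ t₂ : S,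
    f t₀ s₁ = (s₁', t₁) → f t₁ s₂ = (s₂', t₂) →
    f s₁ s₂ = (s₁, s₂) → f s₁' s₂' = (s₁', s₂')

/-- The sequences `δ_p`: `δ₁ = ε` and `δ_p = sh(δ_{p-1})·1·2·⋯·(p-1)`. -/
def delta : ℕ → List ℕ
  | 0 => []
  | 1 => []
  | p + 2 => (delta (p + 1)).map (· + 1) ++ List.range' 1 (p + 1)

/-- Apply `N` to the length-`k` factor beginning at (1-indexed) position `i`. -/
def applyFactorAt (N : List S → List S) (k : ℕ) : ℕ → List S → List S
  | 0, w => w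
  | i + 1, w => w.take i ++ N ((w.drop i).take k) ++ w.drop (i + k)

/-- Apply `N` to length-`k` factors at the successive positions of `u`. -/
def applyFactorSeq (N : List S → List S) (k : ℕ) (u : List ℕ) (w : List S) : List S :=
  u.foldl (fun w i => applyFactorAt N k i w) w

/-- One-step rewriting relation of a rewriting system `R`. -/
def RStep (R : List A → List A → Prop) (x y : List A) : Prop :=
  ∃ u v w w', R w w' ∧ x = u ++ w ++ v ∧ y = u ++ w' ++ v

/-- A rewriting system is terminating if it admits no infinite rewriting sequence. -/
def Terminating (R : List A → List A → Prop) : Prop :=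
  ¬ ∃ f : ℕ → List A, ∀ n, RStep R (f n) (f (n + 1))

/-- Confluence of a rewriting system. -/
def Confluent (R : List A → List A → Prop) : Prop :=
  ∀ w w₁ w₂ : List A, Relation.ReflTransGen (RStep R) w w₁ →
    Relation.ReflTransGen (RStep R) w w₂ →
    ∃ w', Relation.ReflTransGen (RStep R) w₁ w' ∧ Relation.ReflTransGen (RStep R) w₂ w'

/-- A word is `R`-normal if no rule of `R` applies to any of its factors. -/
def RNormal (R : List A → List A → Prop) (w : List A) : Prop :=
  ¬ ∃ w', RStep R w w'

/-- Every word rewrites to some `R`-normal word. -/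
def Normalising (R : List A → List A → Prop) : Prop :=
  ∀ w : List A, ∃ w', Relation.ReflTransGen (RStep R) w w' ∧ RNormal R w'

/-- A rewriting system is quadratic if all its rules relate length-two words. -/
def QuadraticRS (R : List A → List A → Prop) : Prop :=
  ∀ w w', R w w' → w.length = 2 ∧ w'.length = 2

/-- A rewriting system is reduced. -/
def ReducedRS (R : List A → List A → Prop) : Prop :=
  ∀ w w', R w w' → RNormal R w' ∧ RNormal (fun a b => R a b ∧ ¬(a = w ∧ b = w')) w

/-- The rewriting system associated with a quadratic normalisation:
one rule `s·t → N̄(s·t)` for each non-`N`-normal length-two word. -/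
def rules (N : List S → List S) : List S → List S → Prop :=
  fun w w' => ∃ s t : S, w = [s, t] ∧ w' = N [s, t] ∧ w' ≠ w

/-- `π_e`: delete all occurrences of `e`, landing in words over `S∖{e}`. -/
noncomputable def pie (e : S) (w : List S) : List {s : S // s ≠ e} :=
  w.filterMap fun s => @dite _ (s = e) (Classical.dec _) (fun _ => none) (fun h => some ⟨s, h⟩)

/-- The rewriting system `R_e` over `S∖{e}`. -/
def rulesE (N : List S → List S) (e : S) :
    List {s : S // s ≠ e} → List {s : S // s ≠ e} → Prop :=
  fun w w' => ∃ s t : {s : S // s ≠ e},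
    w = [s, t] ∧ N [s.1, t.1] ≠ [s.1, t.1] ∧ w' = pie e (N [s.1, t.1])

/-- `M` admits the monoid presentation `⟨S ∣ r⟩`. -/
def PresentedBy (M : Type*) [Monoid M] (S : Type*) (r : List S → List S → Prop) : Prop :=
  Nonempty ((conGen fun a b : FreeMonoid S => r a.toList b.toList).Quotient ≃* M)

/-- Left-divisibility in a monoid. -/
def LeftDvd {M : Type*} [Monoid M] (f g : M) : Prop :=
  ∃ g', f * g' = g

/-- The pair `s₁, s₂` is `S`-normal (greedy). -/
def SNormalPair {M : Type*} [Monoid M] (S : Set M) (s₁ s₂ : M) : Prop :=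
  ∀ s ∈ S, ∀ f : M, LeftDvd s (f * s₁ * s₂) → LeftDvd s (f * s₁)

/-- A word over `S` is `S`-normal if all its adjacent pairs are. -/
def SNormalWord {M : Type*} [Monoid M] (S : Set M) (w : List S) : Prop :=
  ∀ u v : List S, ∀ a b : S, w = u ++ a :: b :: v → SNormalPair S (a : M) (b : M)

end QN

/-
The converse builds `N` by inserting letters from the left: `N (a · w) = sweep a (N w)`, where
`sweep a` pushes `a` through a word by successive applications of `f`. Read on `a · b · s`,
`f_{212} = f_{1212}` says that sweeping `b` and then `a` through a word only depends on `f(a, b)`;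
by induction this lets `N` absorb any normalised factor, which is the normalisation axiom.
The relation `f_{212} = f_{2121}` is the domino rule, so sweeping preserves `f`-normality, which
makes `N` quadratic. The direct implication is immediate: `N` is idempotent, `N = N̄_{212}` and
`N = N̄_{1212}` on length-three words, and `N̄_1` fixes the `N`-normal word `N w`.
-/

namespace QN

section Sweep

variable {S : Type*} (f : S → S → S × S)

theorem applyAt_succ_cons {i : ℕ} (hi : i ≠ 0) (a : S) (l : List S) :
    applyAt f (i + 1) (a :: l) = a :: applyAt f i l := by
  obtain ⟨n, rfl⟩ := Nat.exists_eq_succ_of_ne_zero hi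
  rfl

theorem applySeq_cons (i : ℕ) (u : List ℕ) (w : List S) :
    applySeq f (i :: u) w = applySeq f u (applyAt f i w) := rfl

theorem applySeq_append (u v : List ℕ) (w : List S) :
    applySeq f (u ++ v) w = applySeq f v (applySeq f u w) :=
  List.foldl_append

theorem applySeq_map_succ_cons {u : List ℕ} (hu : ∀ i ∈ u, i ≠ 0) (a : S) (l : List S) :
    applySeq f (u.map (· + 1)) (a :: l) = a :: applySeq f u l := by
  induction u generalizing l with
  | nil => rfl
  | cons i u ih =>
    rw [List.map_cons, applySeq_cons, applyAt_succ_cons f (hu i List.mem_cons_self),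
      ih (fun j hj => hu j (List.mem_cons_of_mem i hj)), applySeq_cons]

theorem applyAt_of_isChain :
    ∀ {i : ℕ} {w : List S}, w.IsChain (fun s t => f s t = (s, t)) → applyAt f i w = w
  | 1, a :: b :: l, h => by rw [applyAt, (List.isChain_cons_cons.1 h).1]
  | n + 2, a :: l, h => congrArg (a :: ·) (applyAt_of_isChain h.tail)
  | 0, _, _ | 1, [], _ | 1, [_], _ | _ + 2, [], _ => rfl

def sweep : S → List S → List S
  | t, [] => [t]
  | t, s :: x => (f t s).1 :: sweep (f t s).2 x

theorem length_sweep (t : S) (x : List S) : (sweep f t x).length = x.length + 1 := by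
  induction x generalizing t with
  | nil => rfl
  | cons s x ih => simp only [sweep, List.length_cons, ih]

theorem sweep_eq_applySeq (t : S) (x : List S) :
    sweep f t x = applySeq f (List.range' 1 x.length) (t :: x) := by
  induction x generalizing t with
  | nil => rfl
  | cons s x ih =>
    have hpos : ∀ i ∈ List.range' 1 x.length, i ≠ 0 := fun i hi =>
      Nat.one_le_iff_ne_zero.1 (List.mem_range'_1.1 hi).1
    rw [List.length_cons, List.range'_succ, applySeq_cons, applyAt, List.range'_succ_left,
      applySeq_map_succ_cons f hpos, ← ih]
    rfl

/-- In the notation of the paper, `normalForm f w = f_{δ_{|w|}}(w)`. -/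
def normalForm (w : List S) : List S :=
  w.foldr (sweep f) []

theorem normalForm_cons (a : S) (w : List S) :
    normalForm f (a :: w) = sweep f a (normalForm f w) := rfl

theorem normalForm_append (w v : List S) :
    normalForm f (w ++ v) = w.foldr (sweep f) (normalForm f v) :=
  List.foldr_append

theorem length_normalForm (w : List S) : (normalForm f w).length = w.length := by
  induction w with
  | nil => rfl
  | cons a w ih => rw [normalForm_cons, length_sweep, ih, List.length_cons]

theorem normalForm_eq_pair (s t : S) : normalForm f [s, t] = [(f s t).1, (f s t).2] := rfl

theorem nbar_normalForm : nbar (normalForm f) = f := rfl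

theorem normalForm_eq_applySeq_212 (a b c : S) :
    normalForm f [a, b, c] = applySeq f [2, 1, 2] [a, b, c] := rfl

theorem exists_normalForm_eq_applySeq (w : List S) :
    ∃ u : List ℕ, (∀ i ∈ u, i ≠ 0) ∧ normalForm f w = applySeq f u w := by
  induction w with
  | nil => exact ⟨[], by simp, rfl⟩
  | cons a w ih =>
    obtain ⟨u, hu, hw⟩ := ih
    refine ⟨u.map (· + 1) ++ List.range' 1 w.length, ?_, ?_⟩
    · simp only [List.mem_append, List.mem_map, List.mem_range'_1]
      omega
    · rw [normalForm_cons, sweep_eq_applySeq, length_normalForm, applySeq_append,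
        applySeq_map_succ_cons f hu, hw]

end Sweep

section Absorption

variable {S : Type*} {f : S → S → S × S} (hid : ∀ s t : S, f (f s t).1 (f s t).2 = f s t)
  (h1212 : ∀ w : List S, w.length = 3 → applySeq f [2, 1, 2] w = applySeq f [1, 2, 1, 2] w)
include hid h1212

theorem sweep_sweep (a b : S) (x : List S) :
    sweep f a (sweep f b x) = sweep f (f a b).1 (sweep f (f a b).2 x) := by
  induction x generalizing a b with
  | nil => simp only [sweep, hid]
  | cons s x ih =>
    have h := h1212 [a, b, s] rfl
    simp only [applySeq, List.foldl, applyAt, List.cons.injEq] at h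
    obtain ⟨h₁, h₂, h₃, -⟩ := h
    simp only [sweep]
    rw [ih, h₁, Prod.ext h₂ h₃, ← ih]

theorem foldr_sweep_sweep (z : List S) (a : S) (y : List S) :
    (sweep f a y).foldr (sweep f) z = sweep f a (y.foldr (sweep f) z) := by
  induction y generalizing a with
  | nil => rfl
  | cons b y ih =>
    rw [sweep, List.foldr_cons, ih, List.foldr_cons, sweep_sweep hid h1212 a b]

theorem foldr_sweep_normalForm (z x : List S) :
    (normalForm f x).foldr (sweep f) z = x.foldr (sweep f) z := by
  induction x with
  | nil => rfl
  | cons a x ih => rw [normalForm_cons, foldr_sweep_sweep hid h1212, ih, List.foldr_cons]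

theorem normalForm_mid (u v w : List S) :
    normalForm f (u ++ normalForm f w ++ v) = normalForm f (u ++ w ++ v) := by
  rw [List.append_assoc, List.append_assoc, normalForm_append, normalForm_append (v := w ++ v),
    normalForm_append, normalForm_append, foldr_sweep_normalForm hid h1212]

end Absorption

section Normality

variable {S : Type*} {f : S → S → S × S}

theorem dominoRule_of_applySeq_212_eq_2121
    (h2121 : ∀ w : List S, w.length = 3 →
      applySeq f [2, 1, 2] w = applySeq f [2, 1, 2, 1] w) :
    DominoRule f := by
  intro s₁ s₂ s₁' s₂' t₀ t₁ t₂ h₀ h₁ hs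
  have h := h2121 [t₀, s₁, s₂] rfl
  simp only [applySeq, List.foldl, applyAt, hs, h₀, h₁, List.cons.injEq] at h
  exact Prod.ext h.1.symm h.2.1.symm

theorem isChain_sweep (hid : ∀ s t : S, f (f s t).1 (f s t).2 = f s t) (hdom : DominoRule f) :
    ∀ (t : S) {x : List S}, x.IsChain (fun s t => f s t = (s, t)) →
      (sweep f t x).IsChain (fun s t => f s t = (s, t))
  | _, [], _ => List.isChain_singleton _
  | t, [s], _ => List.isChain_pair.2 (hid t s)
  | t, s₁ :: s₂ :: x, hx => by
    have hx' := List.isChain_cons_cons.1 hx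
    have htail := isChain_sweep hid hdom (f t s₁).2 hx'.2
    rw [sweep] at htail ⊢
    exact List.isChain_cons_cons.2 ⟨hdom _ _ _ _ t _ _ rfl rfl hx'.1, htail⟩

theorem sweep_of_isChain :
    ∀ {t : S} {x : List S}, (t :: x).IsChain (fun s t => f s t = (s, t)) → sweep f t x = t :: x
  | _, [], _ => rfl
  | t, s :: x, h => by
    have h' := List.isChain_cons_cons.1 h
    rw [sweep, h'.1, sweep_of_isChain h'.2]

theorem isChain_normalForm (hid : ∀ s t : S, f (f s t).1 (f s t).2 = f s t)
    (hdom : DominoRule f) (w : List S) :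
    (normalForm f w).IsChain (fun s t => f s t = (s, t)) := by
  induction w with
  | nil => exact List.isChain_nil
  | cons a w ih => exact isChain_sweep hid hdom a ih

theorem normalForm_of_isChain {w : List S} (hw : w.IsChain (fun s t => f s t = (s, t))) :
    normalForm f w = w := by
  induction w with
  | nil => rfl
  | cons a w ih => rw [normalForm_cons, ih hw.tail, sweep_of_isChain hw]

theorem locallyNormal_normalForm (hid : ∀ s t : S, f (f s t).1 (f s t).2 = f s t)
    (hdom : DominoRule f) : LocallyNormal (normalForm f) := by
  intro w
  have hpair : ∀ s t : S, normalForm f [s, t] = [s, t] ↔ f s t = (s, t) := by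
    intro s t
    simp only [normalForm_eq_pair, List.cons.injEq, and_true, Prod.ext_iff]
  simp only [hpair]
  constructor
  · intro hw u v s t he
    have hchain := isChain_normalForm hid hdom w
    rw [hw] at hchain
    exact List.isChain_iff_forall_rel_of_append_cons_cons.1 hchain he
  · intro h
    exact normalForm_of_isChain (List.isChain_iff_forall_rel_of_append_cons_cons.2
      fun _ _ u v he => h u v _ _ he)

end Normality

section Class

variable {S : Type*}

theorem nbar_eq_self_of_eq {N : List S → List S} {s t : S} (h : N [s, t] = [s, t]) :
    nbar N s t = (s, t) := by
  rw [nbar, h, pairOf]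

theorem Normalisation.N_N (ns : Normalisation S) (w : List S) : ns.N (ns.N w) = ns.N w := by
  simpa using ns.mid [] [] w

theorem Normalisation.applyAt_nbar_N {ns : Normalisation S} (hq : LocallyNormal ns.N)
    (i : ℕ) (w : List S) : applyAt (nbar ns.N) i (ns.N w) = ns.N w :=
  applyAt_of_isChain _ <| List.isChain_iff_forall_rel_of_append_cons_cons.2
    fun s t u v he => nbar_eq_self_of_eq ((hq _).1 (ns.N_N w) u v s t he)

theorem Normalisation.applySeq_nbar_212_eq_2121_and_1212 {ns : Normalisation S}
    (hq : LocallyNormal ns.N) (hl : LeftClass ns.N 4) (hr : RightClass ns.N 3) {w : List S}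
    (hw : w.length = 3) :
    applySeq (nbar ns.N) [2, 1, 2] w = applySeq (nbar ns.N) [2, 1, 2, 1] w ∧
      applySeq (nbar ns.N) [2, 1, 2] w = applySeq (nbar ns.N) [1, 2, 1, 2] w := by
  have h212 : ns.N w = applySeq (nbar ns.N) [2, 1, 2] w := hr w hw
  refine ⟨?_, h212.symm.trans (hl w hw)⟩
  rw [show [2, 1, 2, 1] = [2, 1, 2] ++ [1] from rfl, applySeq_append, ← h212]
  exact (applyAt_nbar_N hq 1 w).symm

variable {f : S → S → S × S}

def normalisationOf (hid : ∀ s t : S, f (f s t).1 (f s t).2 = f s t)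
    (h1212 : ∀ w : List S, w.length = 3 → applySeq f [2, 1, 2] w = applySeq f [1, 2, 1, 2] w) :
    Normalisation S where
  N := normalForm f
  length_eq := length_normalForm f
  single _ := rfl
  mid := normalForm_mid hid h1212

theorem quadratic_normalForm (hid : ∀ s t : S, f (f s t).1 (f s t).2 = f s t)
    (hdom : DominoRule f) : Quadratic (normalForm f) := by
  refine ⟨locallyNormal_normalForm hid hdom, fun w => ?_⟩
  obtain ⟨u, -, hu⟩ := exists_normalForm_eq_applySeq f w
  exact ⟨u, by rwa [nbar_normalForm]⟩

theorem leftClass_normalForm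
    (h1212 : ∀ w : List S, w.length = 3 → applySeq f [2, 1, 2] w = applySeq f [1, 2, 1, 2] w) :
    LeftClass (normalForm f) 4 := by
  intro w hw
  obtain ⟨a, b, c, rfl⟩ := List.length_eq_three.1 hw
  rw [nbar_normalForm, normalForm_eq_applySeq_212]
  exact h1212 _ hw

theorem rightClass_normalForm : RightClass (normalForm f) 3 := by
  intro w hw
  obtain ⟨a, b, c, rfl⟩ := List.length_eq_three.1 hw
  rw [nbar_normalForm]
  exact normalForm_eq_applySeq_212 f a b c

end Class

end QN

open QN

/-- **Theorem A.** If `(S, N)` is a quadratic normalisation of class `(4, 3)`,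
then `N̄` is idempotent and satisfies `N̄_{212} = N̄_{2121} = N̄_{1212}`. Conversely, every
idempotent map `φ` on length-two words satisfying `φ_{212} = φ_{2121} = φ_{1212}` is the
restriction `N̄` of a quadratic normalisation `(S, N)` of class `(4, 3)`. -/
theorem statement14 {S : Type*} :
    (∀ ns : Normalisation S, Quadratic ns.N → LeftClass ns.N 4 → RightClass ns.N 3 →
      (∀ s t : S, ns.N (ns.N [s, t]) = ns.N [s, t]) ∧
      (∀ w : List S, w.length = 3 →
        applySeq (nbar ns.N) [2, 1, 2] w = applySeq (nbar ns.N) [2, 1, 2, 1] w ∧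
        applySeq (nbar ns.N) [2, 1, 2] w = applySeq (nbar ns.N) [1, 2, 1, 2] w)) ∧
    (∀ f : S → S → S × S,
      (∀ s t : S, f (f s t).1 (f s t).2 = f s t) →
      (∀ w : List S, w.length = 3 →
        applySeq f [2, 1, 2] w = applySeq f [2, 1, 2, 1] w ∧
        applySeq f [2, 1, 2] w = applySeq f [1, 2, 1, 2] w) →
      ∃ ns : Normalisation S, Quadratic ns.N ∧ LeftClass ns.N 4 ∧ RightClass ns.N 3 ∧
        nbar ns.N = f) := by
  refine ⟨fun ns hq hl hr => ⟨fun s t => ns.N_N [s, t], fun w hw =>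
    ns.applySeq_nbar_212_eq_2121_and_1212 hq.1 hl hr hw⟩, fun f hid h => ?_⟩
  have h1212 w hw := (h w hw).2
  have hdom := dominoRule_of_applySeq_212_eq_2121 fun w hw => (h w hw).1
  exact ⟨normalisationOf hid h1212, quadratic_normalForm hid hdom, leftClass_normalForm h1212,
    rightClass_normalForm, nbar_normalForm f⟩
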